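/- arXiv:2603.23060 — 2 statements merged into one kernel-verified Lean document; each statement's English description precedes it below -/
import Mathlib

section
/- Let m ≥ 1, let P: ℝ² → ℂ^{m×1} (column vector) and Q: ℝ² → ℂ^{1×m} (row vector) be smooth functions of (x, t), let s: ℝ² → ℂ be smooth and nowhere zero, and let γ ∈ ℤ. Assume at every point: P_t = P_{xx} − (PQ_x + PQPQ)P − P(Q_xP + QPQP); Q_t = −Q_{xx} − (QP_x − QPQP)Q − Q(P_xQ − PQPQ); s_x = −(QP)·s; and s_t = (−QP_x + QPQP + Q_xP)·s (note QP, QP_x, QPQP, Q_xP are 1×1, i.e. scalars). Then U := s^γ·P and V := s^{−γ}·Q satisfy the vector generalized derivative NLS system: U_t = U_{xx} + γ(U_xV)U + γU_x(VU) + (γ−1)U(V_xU) + (γ−1)(UV_x)U + (γ−1)(UVUV)U − (γ−1)²U(VUVU), and V_t = −V_{xx} + γV(UV_x) + γ(VU)V_x + (γ−1)(VU_x)V + (γ−1)V(U_xV) − (γ−1)V(UVUV) + (γ−1)²(VUVU)V. -/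
noncomputable section

/-- Partial derivative in the first coordinate `x` of `ℝ²`, scalar-valued. -/
def pdx (f : ℝ × ℝ → ℂ) (p : ℝ × ℝ) : ℂ :=
  deriv (fun s => f (s, p.2)) p.1

/-- Partial derivative in the second coordinate `t` of `ℝ²`, scalar-valued. -/
def pdt (f : ℝ × ℝ → ℂ) (p : ℝ × ℝ) : ℂ :=
  deriv (fun s => f (p.1, s)) p.2

/-- Entrywise partial derivative in `x` for matrix-valued functions on `ℝ²`. -/
def pdxM {a b : Type*} (f : ℝ × ℝ → Matrix a b ℂ) (p : ℝ × ℝ) : Matrix a b ℂ :=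
  Matrix.of fun i j => deriv (fun s => f (s, p.2) i j) p.1

/-- Entrywise partial derivative in `t` for matrix-valued functions on `ℝ²`. -/
def pdtM {a b : Type*} (f : ℝ × ℝ → Matrix a b ℂ) (p : ℝ × ℝ) : Matrix a b ℂ :=
  Matrix.of fun i j => deriv (fun s => f (p.1, s) i j) p.2

-- differentiability along lines
lemma diffX {g : ℝ × ℝ → ℂ} (hg : ContDiff ℝ (⊤ : ℕ∞) g) (z : ℝ × ℝ) :
    DifferentiableAt ℝ (fun x => g (x, z.2)) z.1 :=
  ((hg.differentiable (by simp)).comp ((differentiable_id).prodMk (differentiable_const _))).differentiableAt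

lemma diffT {g : ℝ × ℝ → ℂ} (hg : ContDiff ℝ (⊤ : ℕ∞) g) (z : ℝ × ℝ) :
    DifferentiableAt ℝ (fun t => g (z.1, t)) z.2 :=
  ((hg.differentiable (by simp)).comp ((differentiable_const _).prodMk differentiable_id)).differentiableAt

lemma pdx_eq_fderiv {f : ℝ × ℝ → ℂ} (hf : ContDiff ℝ (⊤ : ℕ∞) f) (p : ℝ × ℝ) :
    pdx f p = fderiv ℝ f p (1, 0) := by
  have h1 : HasFDerivAt f (fderiv ℝ f p) p := (hf.differentiable (by simp) p).hasFDerivAt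
  have h2 : HasDerivAt (fun x : ℝ => ((x, p.2) : ℝ × ℝ)) ((1 : ℝ), (0 : ℝ)) p.1 :=
    (hasDerivAt_id p.1).prodMk (hasDerivAt_const p.1 p.2)
  have h3 : HasDerivAt (fun x : ℝ => f (x, p.2)) (fderiv ℝ f p (1, 0)) p.1 := by
    have := h1.comp_hasDerivAt p.1 h2
    simpa [Function.comp_def] using this
  exact h3.deriv

lemma contDiff_pdx {f : ℝ × ℝ → ℂ} (hf : ContDiff ℝ (⊤ : ℕ∞) f) : ContDiff ℝ (⊤ : ℕ∞) (pdx f) := by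
  have : pdx f = fun p => fderiv ℝ f p (1, 0) := funext (pdx_eq_fderiv hf)
  rw [this]
  exact (hf.fderiv_right (by simp)).clm_apply contDiff_const

-- product rules
lemma pdxM_smul {a b : ℕ} (g : ℝ × ℝ → ℂ) (F : ℝ × ℝ → Matrix (Fin a) (Fin b) ℂ) (z : ℝ × ℝ)
    (hg : DifferentiableAt ℝ (fun x => g (x, z.2)) z.1)
    (hF : ∀ i j, DifferentiableAt ℝ (fun x => F (x, z.2) i j) z.1) :
    pdxM (fun w => g w • F w) z = pdx g z • F z + g z • pdxM F z := by
  ext i j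
  have := deriv_fun_mul hg (hF i j)
  simpa [pdxM, pdx, Matrix.smul_apply] using this

lemma pdtM_smul {a b : ℕ} (g : ℝ × ℝ → ℂ) (F : ℝ × ℝ → Matrix (Fin a) (Fin b) ℂ) (z : ℝ × ℝ)
    (hg : DifferentiableAt ℝ (fun t => g (z.1, t)) z.2)
    (hF : ∀ i j, DifferentiableAt ℝ (fun t => F (z.1, t) i j) z.2) :
    pdtM (fun w => g w • F w) z = pdt g z • F z + g z • pdtM F z := by
  ext i j
  have := deriv_fun_mul hg (hF i j)
  simpa [pdtM, pdt, Matrix.smul_apply] using this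

lemma pdxM_sub {a b : ℕ} (F G : ℝ × ℝ → Matrix (Fin a) (Fin b) ℂ) (z : ℝ × ℝ)
    (hF : ∀ i j, DifferentiableAt ℝ (fun x => F (x, z.2) i j) z.1)
    (hG : ∀ i j, DifferentiableAt ℝ (fun x => G (x, z.2) i j) z.1) :
    pdxM (fun w => F w - G w) z = pdxM F z - pdxM G z := by
  ext i j
  have := deriv_fun_sub (hF i j) (hG i j)
  simpa [pdxM, Matrix.sub_apply] using this

lemma pdx_zpow {g : ℝ × ℝ → ℂ} (k : ℤ) (z : ℝ × ℝ)
    (hg : DifferentiableAt ℝ (fun x => g (x, z.2)) z.1) (h0 : g z ≠ 0) :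
    pdx (fun w => g w ^ k) z = (k : ℂ) * g z ^ (k - 1) * pdx g z := by
  have h := (hasDerivAt_zpow k (g z) (Or.inl h0)).comp z.1 hg.hasDerivAt
  have h2 := h.deriv
  simp only [Function.comp_def] at h2
  unfold pdx
  rw [h2]

lemma pdt_zpow {g : ℝ × ℝ → ℂ} (k : ℤ) (z : ℝ × ℝ)
    (hg : DifferentiableAt ℝ (fun t => g (z.1, t)) z.2) (h0 : g z ≠ 0) :
    pdt (fun w => g w ^ k) z = (k : ℂ) * g z ^ (k - 1) * pdt g z := by
  have h := (hasDerivAt_zpow k (g z) (Or.inl h0)).comp z.2 hg.hasDerivAt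
  have h2 := h.deriv
  simp only [Function.comp_def] at h2
  unfold pdt
  rw [h2]

lemma diffX_zpow {g : ℝ × ℝ → ℂ} (k : ℤ) (z : ℝ × ℝ)
    (hg : DifferentiableAt ℝ (fun x => g (x, z.2)) z.1) (h0 : g z ≠ 0) :
    DifferentiableAt ℝ (fun x => g (x, z.2) ^ k) z.1 :=
  by have := ((hasDerivAt_zpow k (g z) (Or.inl h0)).comp z.1 hg.hasDerivAt).differentiableAt; exact this

-- 1x1 collapse lemmas
lemma mul11_left {n : Type*} [Fintype n] (M : Matrix (Fin 1) (Fin 1) ℂ) (R : Matrix (Fin 1) n ℂ) :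
    M * R = M 0 0 • R := by
  ext i j
  simp [Matrix.mul_apply, Matrix.smul_apply, Subsingleton.elim i 0]

lemma mul11_right {n : Type*} [Fintype n] (N : Matrix n (Fin 1) ℂ) (M : Matrix (Fin 1) (Fin 1) ℂ) :
    N * M = M 0 0 • N := by
  ext i j
  simp [Matrix.mul_apply, Matrix.smul_apply, Subsingleton.elim j 0, mul_comm]

lemma diffT_zpow {g : ℝ × ℝ → ℂ} (k : ℤ) (z : ℝ × ℝ)
    (hg : DifferentiableAt ℝ (fun t => g (z.1, t)) z.2) (h0 : g z ≠ 0) :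
    DifferentiableAt ℝ (fun t => g (z.1, t) ^ k) z.2 :=
  by have := ((hasDerivAt_zpow k (g z) (Or.inl h0)).comp z.2 hg.hasDerivAt).differentiableAt; exact this

lemma pdxM_add {a b : ℕ} (F G : ℝ × ℝ → Matrix (Fin a) (Fin b) ℂ) (z : ℝ × ℝ)
    (hF : ∀ i j, DifferentiableAt ℝ (fun x => F (x, z.2) i j) z.1)
    (hG : ∀ i j, DifferentiableAt ℝ (fun x => G (x, z.2) i j) z.1) :
    pdxM (fun w => F w + G w) z = pdxM F z + pdxM G z := by
  ext i j
  have := deriv_fun_add (hF i j) (hG i j)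
  simpa [pdxM, Matrix.add_apply] using this

set_option maxHeartbeats 2000000 in
/-- **Gauge transformation from the matrix Gerdjikov–Ivanov system to the vector
generalized derivative NLS system.**  If the column vector `P`, row vector `Q` and
nowhere-vanishing scalar gauge factor `s` satisfy the matrix GI system together with
`s_x = −(QP)s`, `s_t = (−QP_x + QPQP + Q_xP)s`, then `U := s^γ·P`, `V := s^{−γ}·Q`
satisfy the vector generalized DNLS system. -/
theorem matrix_GI_gauge_to_vector_GDNLS (m : ℕ) (hm : 1 ≤ m)
    (P : ℝ × ℝ → Matrix (Fin m) (Fin 1) ℂ)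
    (Q : ℝ × ℝ → Matrix (Fin 1) (Fin m) ℂ)
    (s : ℝ × ℝ → ℂ) (γ : ℤ)
    (hP : ∀ i j, ContDiff ℝ (⊤ : ℕ∞) fun z => P z i j)
    (hQ : ∀ i j, ContDiff ℝ (⊤ : ℕ∞) fun z => Q z i j)
    (hs : ContDiff ℝ (⊤ : ℕ∞) s) (hs0 : ∀ z, s z ≠ 0)
    (hGI1 : ∀ z, pdtM P z = pdxM (pdxM P) z
      - (P z * pdxM Q z + P z * Q z * P z * Q z) * P z
      - P z * (pdxM Q z * P z + Q z * P z * Q z * P z))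
    (hGI2 : ∀ z, pdtM Q z = -(pdxM (pdxM Q) z)
      - (Q z * pdxM P z - Q z * P z * Q z * P z) * Q z
      - Q z * (pdxM P z * Q z - P z * Q z * P z * Q z))
    (hsx : ∀ z, pdx s z = -((Q z * P z) 0 0) * s z)
    (hst : ∀ z, pdt s z =
      ((-(Q z * pdxM P z) + Q z * P z * Q z * P z + pdxM Q z * P z) 0 0) * s z) :
    (∀ z, pdtM (fun w => s w ^ γ • P w) z =
      pdxM (pdxM (fun w => s w ^ γ • P w)) z
      + (γ : ℂ) • ((pdxM (fun w => s w ^ γ • P w) z * (s z ^ (-γ) • Q z)) * (s z ^ γ • P z))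
      + (γ : ℂ) • (pdxM (fun w => s w ^ γ • P w) z * ((s z ^ (-γ) • Q z) * (s z ^ γ • P z)))
      + ((γ : ℂ) - 1) • ((s z ^ γ • P z) * (pdxM (fun w => s w ^ (-γ) • Q w) z * (s z ^ γ • P z)))
      + ((γ : ℂ) - 1) • (((s z ^ γ • P z) * pdxM (fun w => s w ^ (-γ) • Q w) z) * (s z ^ γ • P z))
      + ((γ : ℂ) - 1) • (((s z ^ γ • P z) * (s z ^ (-γ) • Q z) * (s z ^ γ • P z) * (s z ^ (-γ) • Q z)) * (s z ^ γ • P z))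
      - ((γ : ℂ) - 1) ^ 2 • ((s z ^ γ • P z) * ((s z ^ (-γ) • Q z) * (s z ^ γ • P z) * (s z ^ (-γ) • Q z) * (s z ^ γ • P z)))) ∧
    (∀ z, pdtM (fun w => s w ^ (-γ) • Q w) z =
      -(pdxM (pdxM (fun w => s w ^ (-γ) • Q w)) z)
      + (γ : ℂ) • ((s z ^ (-γ) • Q z) * ((s z ^ γ • P z) * pdxM (fun w => s w ^ (-γ) • Q w) z))
      + (γ : ℂ) • (((s z ^ (-γ) • Q z) * (s z ^ γ • P z)) * pdxM (fun w => s w ^ (-γ) • Q w) z)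
      + ((γ : ℂ) - 1) • (((s z ^ (-γ) • Q z) * pdxM (fun w => s w ^ γ • P w) z) * (s z ^ (-γ) • Q z))
      + ((γ : ℂ) - 1) • ((s z ^ (-γ) • Q z) * (pdxM (fun w => s w ^ γ • P w) z * (s z ^ (-γ) • Q z)))
      - ((γ : ℂ) - 1) • ((s z ^ (-γ) • Q z) * ((s z ^ γ • P z) * (s z ^ (-γ) • Q z) * (s z ^ γ • P z) * (s z ^ (-γ) • Q z)))
      + ((γ : ℂ) - 1) ^ 2 • (((s z ^ (-γ) • Q z) * (s z ^ γ • P z) * (s z ^ (-γ) • Q z) * (s z ^ γ • P z)) * (s z ^ (-γ) • Q z))) := by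
  have hsX : ∀ z : ℝ × ℝ, DifferentiableAt ℝ (fun x => s (x, z.2)) z.1 := diffX hs
  have hsT : ∀ z : ℝ × ℝ, DifferentiableAt ℝ (fun t => s (z.1, t)) z.2 := diffT hs
  have hPX : ∀ (z : ℝ × ℝ) i j, DifferentiableAt ℝ (fun x => P (x, z.2) i j) z.1 :=
    fun z i j => diffX (hP i j) z
  have hQX : ∀ (z : ℝ × ℝ) i j, DifferentiableAt ℝ (fun x => Q (x, z.2) i j) z.1 :=
    fun z i j => diffX (hQ i j) z
  have hPxC : ∀ i j, ContDiff ℝ (⊤ : ℕ∞) (fun w => pdxM P w i j) := fun i j => contDiff_pdx (hP i j)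
  have hQxC : ∀ i j, ContDiff ℝ (⊤ : ℕ∞) (fun w => pdxM Q w i j) := fun i j => contDiff_pdx (hQ i j)
  have hA : ContDiff ℝ (⊤ : ℕ∞) (fun w => (Q w * P w) 0 0) := by
    have h : (fun w => (Q w * P w) 0 0) = fun w => ∑ k, Q w 0 k * P w k 0 := by
      funext w; simp [Matrix.mul_apply]
    rw [h]
    exact ContDiff.sum fun k _ => (hQ 0 k).mul (hP k 0)
  have hAx : ∀ z, pdx (fun w => (Q w * P w) 0 0) z
      = (pdxM Q z * P z) 0 0 + (Q z * pdxM P z) 0 0 := by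
    intro z
    have hfun : (fun x : ℝ => (Q (x, z.2) * P (x, z.2)) 0 0)
        = fun x => ∑ k, Q (x, z.2) 0 k * P (x, z.2) k 0 := by
      funext x; simp [Matrix.mul_apply]
    have hterm : ∀ k : Fin m, deriv (fun x => Q (x, z.2) 0 k * P (x, z.2) k 0) z.1
        = pdxM Q z 0 k * P z k 0 + Q z 0 k * pdxM P z k 0 :=
      fun k => deriv_fun_mul (hQX z 0 k) (hPX z k 0)
    unfold pdx
    rw [hfun, deriv_fun_sum (A := fun k x => Q (x, z.2) 0 k * P (x, z.2) k 0) (fun k _ => (hQX z 0 k).mul (hPX z k 0))]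
    simp only [hterm]
    simp [Matrix.mul_apply, Matrix.add_apply, Finset.sum_add_distrib]
  -- first x-derivatives
  have hUx : pdxM (fun w => s w ^ γ • P w)
      = fun z => s z ^ γ • (pdxM P z - ((γ : ℂ) * (Q z * P z) 0 0) • P z) := by
    funext z
    rw [pdxM_smul _ _ z (diffX_zpow γ z (hsX z) (hs0 z)) (fun i j => hPX z i j),
        pdx_zpow γ z (hsX z) (hs0 z), hsx z, zpow_sub_one₀ (hs0 z)]
    match_scalars <;> (field_simp [hs0 z, zpow_ne_zero γ (hs0 z), zpow_ne_zero (-γ) (hs0 z), zpow_ne_zero (γ-1) (hs0 z), zpow_ne_zero (-γ-1) (hs0 z)]; try ring)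
  have hVx : pdxM (fun w => s w ^ (-γ) • Q w)
      = fun z => s z ^ (-γ) • (pdxM Q z + ((γ : ℂ) * (Q z * P z) 0 0) • Q z) := by
    funext z
    rw [pdxM_smul _ _ z (diffX_zpow (-γ) z (hsX z) (hs0 z)) (fun i j => hQX z i j),
        pdx_zpow (-γ) z (hsX z) (hs0 z), hsx z, zpow_sub_one₀ (hs0 z)]
    match_scalars <;> (field_simp [hs0 z, zpow_ne_zero γ (hs0 z), zpow_ne_zero (-γ) (hs0 z), zpow_ne_zero (γ-1) (hs0 z), zpow_ne_zero (-γ-1) (hs0 z)]; try ring)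
  -- second x-derivatives
  have hcC : ContDiff ℝ (⊤ : ℕ∞) (fun w => (γ : ℂ) * (Q w * P w) 0 0) := contDiff_const.mul hA
  have hcx : ∀ z, pdx (fun w => (γ : ℂ) * (Q w * P w) 0 0) z
      = (γ : ℂ) * ((pdxM Q z * P z) 0 0 + (Q z * pdxM P z) 0 0) := by
    intro z
    have h1 := deriv_const_mul (γ : ℂ) (diffX hA z)
    have h2 := hAx z
    unfold pdx at h2 ⊢
    rw [h1, h2]
  have hUxx : ∀ z, pdxM (pdxM (fun w => s w ^ γ • P w)) z
      = s z ^ γ • (pdxM (pdxM P) z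
          - ((2 : ℂ) * (γ : ℂ) * (Q z * P z) 0 0) • pdxM P z
          - ((γ : ℂ) * ((pdxM Q z * P z) 0 0 + (Q z * pdxM P z) 0 0)) • P z
          + ((γ : ℂ) ^ 2 * ((Q z * P z) 0 0) ^ 2) • P z) := by
    intro z
    rw [hUx]
    have hGdiff : ∀ (i : Fin m) (j : Fin 1), DifferentiableAt ℝ
        (fun x => (((γ : ℂ) * (Q (x, z.2) * P (x, z.2)) 0 0) • P (x, z.2)) i j) z.1 := by
      intro i j
      have h : (fun x => (((γ : ℂ) * (Q (x, z.2) * P (x, z.2)) 0 0) • P (x, z.2)) i j)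
          = fun x => ((γ : ℂ) * (Q (x, z.2) * P (x, z.2)) 0 0) * P (x, z.2) i j := by
        funext x; simp [Matrix.smul_apply]
      rw [h]
      exact (diffX hcC z).mul (hPX z i j)
    have hRdiff : ∀ (i : Fin m) (j : Fin 1), DifferentiableAt ℝ
        (fun x => (pdxM P (x, z.2) - ((γ : ℂ) * (Q (x, z.2) * P (x, z.2)) 0 0) • P (x, z.2)) i j) z.1 := by
      intro i j
      have h : (fun x => (pdxM P (x, z.2) - ((γ : ℂ) * (Q (x, z.2) * P (x, z.2)) 0 0) • P (x, z.2)) i j)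
          = fun x => pdxM P (x, z.2) i j - ((γ : ℂ) * (Q (x, z.2) * P (x, z.2)) 0 0) * P (x, z.2) i j := by
        funext x; simp [Matrix.sub_apply, Matrix.smul_apply]
      rw [h]
      exact (diffX (hPxC i j) z).sub ((diffX hcC z).mul (hPX z i j))
    rw [pdxM_smul _ _ z (diffX_zpow γ z (hsX z) (hs0 z)) hRdiff,
        pdxM_sub _ _ z (fun i j => diffX (hPxC i j) z) hGdiff,
        pdxM_smul _ _ z (diffX hcC z) (fun i j => hPX z i j),
        hcx z, pdx_zpow γ z (hsX z) (hs0 z), hsx z, zpow_sub_one₀ (hs0 z)]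
    match_scalars <;> (field_simp [hs0 z, zpow_ne_zero γ (hs0 z), zpow_ne_zero (-γ) (hs0 z), zpow_ne_zero (γ-1) (hs0 z), zpow_ne_zero (-γ-1) (hs0 z)]; try ring)
  have hVxx : ∀ z, pdxM (pdxM (fun w => s w ^ (-γ) • Q w)) z
      = s z ^ (-γ) • (pdxM (pdxM Q) z
          + ((2 : ℂ) * (γ : ℂ) * (Q z * P z) 0 0) • pdxM Q z
          + ((γ : ℂ) * ((pdxM Q z * P z) 0 0 + (Q z * pdxM P z) 0 0)) • Q z
          + ((γ : ℂ) ^ 2 * ((Q z * P z) 0 0) ^ 2) • Q z) := by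
    intro z
    rw [hVx]
    have hGdiff : ∀ (i : Fin 1) (j : Fin m), DifferentiableAt ℝ
        (fun x => (((γ : ℂ) * (Q (x, z.2) * P (x, z.2)) 0 0) • Q (x, z.2)) i j) z.1 := by
      intro i j
      have h : (fun x => (((γ : ℂ) * (Q (x, z.2) * P (x, z.2)) 0 0) • Q (x, z.2)) i j)
          = fun x => ((γ : ℂ) * (Q (x, z.2) * P (x, z.2)) 0 0) * Q (x, z.2) i j := by
        funext x; simp [Matrix.smul_apply]
      rw [h]
      exact (diffX hcC z).mul (hQX z i j)
    have hRdiff : ∀ (i : Fin 1) (j : Fin m), DifferentiableAt ℝ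
        (fun x => (pdxM Q (x, z.2) + ((γ : ℂ) * (Q (x, z.2) * P (x, z.2)) 0 0) • Q (x, z.2)) i j) z.1 := by
      intro i j
      have h : (fun x => (pdxM Q (x, z.2) + ((γ : ℂ) * (Q (x, z.2) * P (x, z.2)) 0 0) • Q (x, z.2)) i j)
          = fun x => pdxM Q (x, z.2) i j + ((γ : ℂ) * (Q (x, z.2) * P (x, z.2)) 0 0) * Q (x, z.2) i j := by
        funext x; simp [Matrix.add_apply, Matrix.smul_apply]
      rw [h]
      exact (diffX (hQxC i j) z).add ((diffX hcC z).mul (hQX z i j))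
    rw [pdxM_smul _ _ z (diffX_zpow (-γ) z (hsX z) (hs0 z)) hRdiff,
        pdxM_add _ _ z (fun i j => diffX (hQxC i j) z) hGdiff,
        pdxM_smul _ _ z (diffX hcC z) (fun i j => hQX z i j),
        hcx z, pdx_zpow (-γ) z (hsX z) (hs0 z), hsx z, zpow_sub_one₀ (hs0 z)]
    match_scalars <;> (field_simp [hs0 z, zpow_ne_zero γ (hs0 z), zpow_ne_zero (-γ) (hs0 z), zpow_ne_zero (γ-1) (hs0 z), zpow_ne_zero (-γ-1) (hs0 z)]; try ring)
  -- t-derivatives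
  have hUt : ∀ z, pdtM (fun w => s w ^ γ • P w) z
      = s z ^ γ • (pdtM P z
          + ((γ : ℂ) * ((-(Q z * pdxM P z) + Q z * P z * Q z * P z + pdxM Q z * P z) 0 0)) • P z) := by
    intro z
    rw [pdtM_smul _ _ z (diffT_zpow γ z (hsT z) (hs0 z)) (fun i j => diffT (hP i j) z),
        pdt_zpow γ z (hsT z) (hs0 z), hst z, zpow_sub_one₀ (hs0 z)]
    match_scalars <;> (field_simp [hs0 z, zpow_ne_zero γ (hs0 z), zpow_ne_zero (-γ) (hs0 z), zpow_ne_zero (γ-1) (hs0 z), zpow_ne_zero (-γ-1) (hs0 z)]; try ring)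
  have hVt : ∀ z, pdtM (fun w => s w ^ (-γ) • Q w) z
      = s z ^ (-γ) • (pdtM Q z
          - ((γ : ℂ) * ((-(Q z * pdxM P z) + Q z * P z * Q z * P z + pdxM Q z * P z) 0 0)) • Q z) := by
    intro z
    rw [pdtM_smul _ _ z (diffT_zpow (-γ) z (hsT z) (hs0 z)) (fun i j => diffT (hQ i j) z),
        pdt_zpow (-γ) z (hsT z) (hs0 z), hst z, zpow_sub_one₀ (hs0 z)]
    match_scalars <;> (field_simp [hs0 z, zpow_ne_zero γ (hs0 z), zpow_ne_zero (-γ) (hs0 z), zpow_ne_zero (γ-1) (hs0 z), zpow_ne_zero (-γ-1) (hs0 z)]; try ring)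
  constructor
  · intro z
    rw [hUt z, hGI1 z, hUxx z]
    simp only [hUx, hVx]
    simp only [Matrix.mul_assoc, Matrix.smul_mul, Matrix.mul_smul, Matrix.add_mul,
      Matrix.mul_add, Matrix.sub_mul, Matrix.mul_sub, Matrix.neg_mul, Matrix.mul_neg,
      mul11_left, mul11_right, Matrix.add_apply, Matrix.sub_apply, Matrix.neg_apply,
      Matrix.smul_apply, smul_eq_mul, smul_smul, smul_add, smul_sub, neg_smul, smul_neg,
      neg_neg, zpow_neg]
    match_scalars <;> (field_simp [hs0 z, zpow_ne_zero γ (hs0 z), zpow_ne_zero (-γ) (hs0 z)]; try ring)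
  · intro z
    rw [hVt z, hGI2 z, hVxx z]
    simp only [hUx, hVx]
    simp only [← Matrix.mul_assoc, Matrix.smul_mul, Matrix.mul_smul, Matrix.add_mul,
      Matrix.mul_add, Matrix.sub_mul, Matrix.mul_sub, Matrix.neg_mul, Matrix.mul_neg,
      mul11_left, mul11_right, Matrix.add_apply, Matrix.sub_apply, Matrix.neg_apply,
      Matrix.smul_apply, smul_eq_mul, smul_smul, smul_add, smul_sub, neg_smul, smul_neg,
      neg_neg, zpow_neg]
    match_scalars <;> (field_simp [hs0 z, zpow_ne_zero γ (hs0 z), zpow_ne_zero (-γ) (hs0 z)]; try ring)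

end
end

section
/- Let N, M ≥ 1, let Ξ, Λ ∈ M_N(ℂ) be constant matrices with no common eigenvalue, let E ∈ M_M(ℂ) be a constant matrix, and let η: ℝ → ℂ^{N×M}, θ: ℝ → ℂ^{M×N}, Ω: ℝ → M_N(ℂ) be differentiable functions of a real variable t₀ such that at every t₀: Ξ·Ω − Ω·Λ = η·θ; ∂₀η = η·E; and ∂₀θ = −E·θ. Then: (a) ∂₀Ω = 0, i.e. Ω is constant; and (b) if in addition Ω is pointwise invertible, then K := θ·Ω⁻¹·η satisfies the dimensional reduction constraint ∂₀K = K·E − E·K = [K, E]. -/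
/-!
Differentiating `ΞΩ − ΩΛ = ηθ` gives `ΞΩ' − Ω'Λ = η'θ + ηθ' = ηEθ − ηEθ = 0`, and a Sylvester
equation `ΞX = XΛ` with `σ(Ξ) ∩ σ(Λ) = ∅` only has the solution `X = 0`: the intertwining passes
to `p(Ξ) X = X p(Λ)` for every polynomial `p`, and for `p = χ_Λ` the right side vanishes by
Cayley–Hamilton while `χ_Λ(Ξ)` is invertible by the spectral mapping theorem. Hence `Ω` is
constant, and then `∂₀(θΩ⁻¹η) = −EθΩ⁻¹η + θΩ⁻¹ηE`.
-/

noncomputable section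

/-- Entrywise derivative of a matrix-valued function of one real variable `t₀`. -/
def dM {a b : Type*} (f : ℝ → Matrix a b ℂ) (t : ℝ) : Matrix a b ℂ :=
  Matrix.of fun i j => deriv (fun s => f s i j) t

open Polynomial

namespace Matrix

variable {K m n : Type*} [Field K] [Fintype m] [DecidableEq m] [Fintype n] [DecidableEq n]

theorem aeval_mul_eq_mul_aeval {A : Matrix m m K} {B : Matrix n n K} {X : Matrix m n K}
    (h : A * X = X * B) (p : K[X]) : aeval A p * X = X * aeval B p := by
  have hpow : ∀ k : ℕ, A ^ k * X = X * B ^ k := by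
    intro k
    induction k with
    | zero => simp
    | succ k ih => rw [pow_succ', Matrix.mul_assoc, ih, ← Matrix.mul_assoc, h, Matrix.mul_assoc,
        ← pow_succ']
  induction p using Polynomial.induction_on' with
  | add p q hp hq => rw [map_add, map_add, Matrix.add_mul, Matrix.mul_add, hp, hq]
  | monomial k c => simp only [aeval_monomial, Algebra.algebraMap_eq_smul_one, Matrix.smul_mul,
      Matrix.mul_smul, Matrix.one_mul, hpow]

variable [IsAlgClosed K]

theorem isUnit_aeval_charpoly_of_disjoint_spectrum {A : Matrix m m K} {B : Matrix n n K}
    (hAB : Disjoint (spectrum K A) (spectrum K B)) : IsUnit (aeval A B.charpoly) := by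
  nontriviality Matrix m m K
  by_contra hnot
  rw [← spectrum.zero_mem_iff K, spectrum.map_polynomial_aeval_of_nonempty A _
    (spectrum.nonempty_of_isAlgClosed_of_finiteDimensional K A)] at hnot
  obtain ⟨μ, hμA, hμB⟩ := hnot
  exact hAB.ne_of_mem hμA (mem_spectrum_iff_isRoot_charpoly.2 hμB) rfl

theorem eq_zero_of_mul_eq_mul_of_disjoint_spectrum {A : Matrix m m K} {B : Matrix n n K}
    {X : Matrix m n K} (hAB : Disjoint (spectrum K A) (spectrum K B)) (h : A * X = X * B) :
    X = 0 := by
  have hkill : aeval A B.charpoly * X = 0 := by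
    rw [aeval_mul_eq_mul_aeval h, aeval_self_charpoly, Matrix.mul_zero]
  have hunit := isUnit_iff_isUnit_det _ |>.1 (isUnit_aeval_charpoly_of_disjoint_spectrum hAB)
  rw [← nonsing_inv_mul_cancel_left (A := aeval A B.charpoly) X hunit, hkill, Matrix.mul_zero]

end Matrix

section EntrywiseDerivative

variable {a b c : Type*} {t : ℝ}

theorem dM_const (A : Matrix a b ℂ) : dM (fun _ => A) t = 0 := by
  ext i j
  simp [dM]

theorem dM_sub {f g : ℝ → Matrix a b ℂ}
    (hf : ∀ i j, DifferentiableAt ℝ (fun s => f s i j) t)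
    (hg : ∀ i j, DifferentiableAt ℝ (fun s => g s i j) t) :
    dM (fun s => f s - g s) t = dM f t - dM g t := by
  ext i j
  exact deriv_sub (hf i j) (hg i j)

theorem eq_of_dM_eq_zero {f : ℝ → Matrix a b ℂ} (hf : ∀ i j, Differentiable ℝ fun s => f s i j)
    (h : ∀ t, dM f t = 0) (s t : ℝ) : f s = f t := by
  ext i j
  exact is_const_of_deriv_eq_zero (hf i j) (fun x => by simpa [dM] using congrFun₂ (h x) i j) s t

variable [Fintype b]

theorem differentiableAt_mul_apply {f : ℝ → Matrix a b ℂ} {g : ℝ → Matrix b c ℂ}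
    (hf : ∀ i j, DifferentiableAt ℝ (fun s => f s i j) t)
    (hg : ∀ i j, DifferentiableAt ℝ (fun s => g s i j) t) (i : a) (j : c) :
    DifferentiableAt ℝ (fun s => (f s * g s) i j) t := by
  simp only [Matrix.mul_apply]
  exact DifferentiableAt.fun_sum fun k _ => (hf i k).fun_mul (hg k j)

theorem dM_mul {f : ℝ → Matrix a b ℂ} {g : ℝ → Matrix b c ℂ}
    (hf : ∀ i j, DifferentiableAt ℝ (fun s => f s i j) t)
    (hg : ∀ i j, DifferentiableAt ℝ (fun s => g s i j) t) :
    dM (fun s => f s * g s) t = dM f t * g t + f t * dM g t := by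
  ext i j
  simp only [dM, Matrix.of_apply, Matrix.mul_apply, Matrix.add_apply]
  rw [deriv_fun_sum fun k _ => (hf i k).fun_mul (hg k j), ← Finset.sum_add_distrib]
  exact Finset.sum_congr rfl fun k _ => deriv_fun_mul (hf i k) (hg k j)

theorem dM_mul_const {f : ℝ → Matrix a b ℂ} (hf : ∀ i j, DifferentiableAt ℝ (fun s => f s i j) t)
    (B : Matrix b c ℂ) : dM (fun s => f s * B) t = dM f t * B := by
  rw [dM_mul (g := fun _ => B) hf fun _ _ => differentiableAt_const _, dM_const, Matrix.mul_zero,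
    add_zero]

theorem dM_const_mul (A : Matrix a b ℂ) {g : ℝ → Matrix b c ℂ}
    (hg : ∀ i j, DifferentiableAt ℝ (fun s => g s i j) t) :
    dM (fun s => A * g s) t = A * dM g t := by
  rw [dM_mul (f := fun _ => A) (fun _ _ => differentiableAt_const _) hg, dM_const, Matrix.zero_mul,
    zero_add]

theorem dM_mul_sub_mul [Fintype a] (A : Matrix a a ℂ) (B : Matrix b b ℂ) {X : ℝ → Matrix a b ℂ}
    (hX : ∀ i j, DifferentiableAt ℝ (fun s => X s i j) t) :
    dM (fun s => A * X s - X s * B) t = A * dM X t - dM X t * B := by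
  have hAX := differentiableAt_mul_apply (f := fun _ => A) (fun _ _ => differentiableAt_const _) hX
  have hXB := differentiableAt_mul_apply (g := fun _ => B) hX fun _ _ => differentiableAt_const _
  rw [dM_sub hAX hXB, dM_const_mul A hX, dM_mul_const hX]

end EntrywiseDerivative

section OppositeFlows

variable {n m : Type*} [Fintype m] {E : Matrix m m ℂ} {η : ℝ → Matrix n m ℂ}
  {θ : ℝ → Matrix m n ℂ} {t : ℝ}

theorem dM_mul_eq_zero_of_opposite_flows
    (hηd : ∀ i j, DifferentiableAt ℝ (fun s => η s i j) t)
    (hθd : ∀ i j, DifferentiableAt ℝ (fun s => θ s i j) t)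
    (hη : dM η t = η t * E) (hθ : dM θ t = -(E * θ t)) :
    dM (fun s => η s * θ s) t = 0 := by
  rw [dM_mul hηd hθd, hη, hθ, Matrix.mul_neg, Matrix.mul_assoc, add_neg_cancel]

theorem dM_mul_const_mul_of_opposite_flows [Fintype n] (C : Matrix n n ℂ)
    (hηd : ∀ i j, DifferentiableAt ℝ (fun s => η s i j) t)
    (hθd : ∀ i j, DifferentiableAt ℝ (fun s => θ s i j) t)
    (hη : dM η t = η t * E) (hθ : dM θ t = -(E * θ t)) :
    dM (fun s => θ s * C * η s) t = θ t * C * η t * E - E * (θ t * C * η t) := by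
  have hθC := differentiableAt_mul_apply (g := fun _ => C) hθd fun _ _ => differentiableAt_const _
  rw [dM_mul hθC hηd, dM_mul_const hθd, hθ, hη]
  simp only [Matrix.neg_mul, Matrix.mul_assoc]
  abel

end OppositeFlows

theorem gram_dimensional_reduction_general (N M : ℕ)
    (Ξ Λ : Matrix (Fin N) (Fin N) ℂ)
    (hΞΛ : spectrum ℂ Ξ ∩ spectrum ℂ Λ = ∅)
    (E : Matrix (Fin M) (Fin M) ℂ)
    (η : ℝ → Matrix (Fin N) (Fin M) ℂ)
    (θ : ℝ → Matrix (Fin M) (Fin N) ℂ)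
    (Ω : ℝ → Matrix (Fin N) (Fin N) ℂ)
    (hηd : ∀ i j, Differentiable ℝ fun t => η t i j)
    (hθd : ∀ i j, Differentiable ℝ fun t => θ t i j)
    (hΩd : ∀ i j, Differentiable ℝ fun t => Ω t i j)
    (hSyl : ∀ t, Ξ * Ω t - Ω t * Λ = η t * θ t)
    (hη : ∀ t, dM η t = η t * E)
    (hθ : ∀ t, dM θ t = -(E * θ t)) :
    (∀ t, dM Ω t = 0) ∧
    ((∀ t, IsUnit (Ω t)) →
      ∀ t, dM (fun s => θ s * (Ω s)⁻¹ * η s) t =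
        (θ t * (Ω t)⁻¹ * η t) * E - E * (θ t * (Ω t)⁻¹ * η t)) := by
  have hΩ' : ∀ t, dM Ω t = 0 := by
    intro t
    refine Matrix.eq_zero_of_mul_eq_mul_of_disjoint_spectrum
      (Set.disjoint_iff_inter_eq_empty.2 hΞΛ) (sub_eq_zero.1 ?_)
    rw [← dM_mul_sub_mul Ξ Λ fun i j => hΩd i j t, funext hSyl,
      dM_mul_eq_zero_of_opposite_flows (fun i j => hηd i j t) (fun i j => hθd i j t) (hη t) (hθ t)]
  refine ⟨hΩ', fun _ t => ?_⟩
  have hΩconst : ∀ s, Ω s = Ω t := (eq_of_dM_eq_zero hΩd hΩ' · t)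
  simp_rw [hΩconst]
  exact dM_mul_const_mul_of_opposite_flows _ (fun i j => hηd i j t) (fun i j => hθd i j t)
    (hη t) (hθ t)

/-- **Realization of the dimensional reduction constraint for Gram-type solutions.**
If `ΞΩ − ΩΛ = ηθ` with `Ξ, Λ` sharing no eigenvalue, and `∂₀η = ηE`, `∂₀θ = −Eθ`, then
(a) `∂₀Ω = 0`; and (b) if `Ω` is pointwise invertible, `K = θΩ⁻¹η` satisfies
`∂₀K = KE − EK = [K, E]`. -/
theorem gram_dimensional_reduction (N M : ℕ) (hN : 1 ≤ N) (hM : 1 ≤ M)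
    (Ξ Λ : Matrix (Fin N) (Fin N) ℂ)
    (hΞΛ : spectrum ℂ Ξ ∩ spectrum ℂ Λ = ∅)
    (E : Matrix (Fin M) (Fin M) ℂ)
    (η : ℝ → Matrix (Fin N) (Fin M) ℂ)
    (θ : ℝ → Matrix (Fin M) (Fin N) ℂ)
    (Ω : ℝ → Matrix (Fin N) (Fin N) ℂ)
    (hηd : ∀ i j, Differentiable ℝ fun t => η t i j)
    (hθd : ∀ i j, Differentiable ℝ fun t => θ t i j)
    (hΩd : ∀ i j, Differentiable ℝ fun t => Ω t i j)
    (hSyl : ∀ t, Ξ * Ω t - Ω t * Λ = η t * θ t)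
    (hη : ∀ t, dM η t = η t * E)
    (hθ : ∀ t, dM θ t = -(E * θ t)) :
    (∀ t, dM Ω t = 0) ∧
    ((∀ t, IsUnit (Ω t)) →
      ∀ t, dM (fun s => θ s * (Ω s)⁻¹ * η s) t =
        (θ t * (Ω t)⁻¹ * η t) * E - E * (θ t * (Ω t)⁻¹ * η t)) :=
  gram_dimensional_reduction_general N M Ξ Λ hΞΛ E η θ Ω hηd hθd hΩd hSyl hη hθ

end
end
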